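/- arXiv:1810.11239 — 2 statements merged into one kernel-verified Lean document; each statement's English description precedes it below -/
import Mathlib

section
/- Let d ≥ 2 and let P = ⋂_{1≤i≤m} {x ∈ ℝ^d : x·v_i ≤ φ_i} be a convex polytope with pairwise distinct unit vectors v₁,…,v_m and nonempty faces F_i = P ∩ {x ∈ ℝ^d : x·v_i = φ_i}. For every δ > 0, the cylinders C_i = cyl(F_i + δv_i, δ) = {y + t·v_i : y ∈ F_i + δv_i, t ∈ [−δ, δ]}, 1 ≤ i ≤ m, have pairwise disjoint interiors. -/
open MeasureTheory Filter Set Metric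
open scoped ENNReal Topology Pointwise RealInnerProductSpace ProbabilityTheory symmDiff

noncomputable section

namespace AnchoredIso

/-- Vertices of the lattice `ℤ^d`. -/
abbrev Vd (d : ℕ) := Fin d → ℤ

/-- The ambient Euclidean space `ℝ^d`. -/
abbrev Ed (d : ℕ) := EuclideanSpace ℝ (Fin d)

/-- Canonical embedding of the lattice `ℤ^d` into `ℝ^d`. -/
def toR {d : ℕ} (x : Vd d) : Ed d :=
  (WithLp.equiv 2 (Fin d → ℝ)).symm (fun i => (x i : ℝ))

/-- Nearest-neighbour adjacency in `ℤ^d`: the `ℓ¹`-distance is one. -/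
def adjV {d : ℕ} (x y : Vd d) : Prop := (∑ i, (x i - y i).natAbs) = 1

/-- A percolation configuration: every unordered pair of vertices carries a state
(`true` = open). Only pairs of nearest neighbours are relevant. -/
abbrev Config (d : ℕ) := Sym2 (Vd d) → Bool

/-- The edge between `x` and `y` exists and is open in the configuration `ω`. -/
def openAdj {d : ℕ} (ω : Config d) (x y : Vd d) : Prop :=
  adjV x y ∧ ω s(x, y) = true

/-- Open connectivity using only vertices of `S`. -/
def openConnIn {d : ℕ} (ω : Config d) (S : Set (Vd d)) (x y : Vd d) : Prop :=
  Relation.ReflTransGen (fun a b => a ∈ S ∧ b ∈ S ∧ openAdj ω a b) x y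

/-- The open cluster of `x` inside the set of vertices `S`. -/
def clusterIn {d : ℕ} (ω : Config d) (S : Set (Vd d)) (x : Vd d) : Set (Vd d) :=
  {y | y ∈ S ∧ openConnIn ω S x y}

/-- The open cluster of `x`. -/
def cluster {d : ℕ} (ω : Config d) (x : Vd d) : Set (Vd d) :=
  clusterIn ω Set.univ x

/-- The union of the infinite open clusters (a.s. the unique infinite cluster `𝒞_∞`). -/
def infCluster {d : ℕ} (ω : Config d) : Set (Vd d) := {x | (cluster ω x).Infinite}

/-- The event `{0 ∈ 𝒞_∞}`. -/
def percEvent (d : ℕ) : Set (Config d) := {ω | (0 : Vd d) ∈ infCluster ω}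

/-- The edge boundary `∂H` of a finite set of vertices. -/
def edgeBoundary {d : ℕ} (H : Finset (Vd d)) : Set (Sym2 (Vd d)) :=
  {e | ∃ x y, adjV x y ∧ x ∈ H ∧ y ∉ H ∧ e = s(x, y)}

/-- The open edge boundary `∂°H`. -/
def openEdgeBoundary {d : ℕ} (ω : Config d) (H : Finset (Vd d)) : Set (Sym2 (Vd d)) :=
  {e | e ∈ edgeBoundary H ∧ ω e = true}

/-- `H` is connected through open edges within itself. -/
def OpenConnected {d : ℕ} (ω : Config d) (H : Finset (Vd d)) : Prop :=
  ∀ x ∈ H, ∀ y ∈ H, openConnIn ω (↑H) x y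

/-- A valid subgraph for the anchored isoperimetric profile at scale `n`. -/
def Valid {d : ℕ} (n : ℕ) (ω : Config d) (H : Finset (Vd d)) : Prop :=
  (0 : Vd d) ∈ H ∧ ↑H ⊆ infCluster ω ∧ OpenConnected ω H ∧
    0 < H.card ∧ H.card ≤ n ^ d

/-- Open edge boundary size to volume ratio. -/
def ratio {d : ℕ} (ω : Config d) (H : Finset (Vd d)) : ℝ :=
  ((openEdgeBoundary ω H).ncard : ℝ) / (H.card : ℝ)

/-- The anchored isoperimetric profile `φ_n`. -/
def phi {d : ℕ} (n : ℕ) (ω : Config d) : ℝ :=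
  sInf {r | ∃ H : Finset (Vd d), Valid n ω H ∧ r = ratio ω H}

/-- The set `𝒢_n` of valid subgraphs realizing `φ_n`. -/
def minimizers {d : ℕ} (n : ℕ) (ω : Config d) : Set (Finset (Vd d)) :=
  {H | Valid n ω H ∧ ratio ω H = phi n ω}

/-- `μ` is an i.i.d. Bernoulli bond percolation measure of parameter `q`:
it is a probability measure whose finite-dimensional marginals are those of
independent Bernoulli(q) edge states. -/
def IsBernoulli {d : ℕ} (q : ℝ) (μ : Measure (Config d)) : Prop :=
  IsProbabilityMeasure μ ∧
    ∀ (S : Finset (Sym2 (Vd d))) (η : Config d),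
      μ {ω | ∀ e ∈ S, ω e = η e} =
        ∏ e ∈ S, ENNReal.ofReal (if η e = true then q else 1 - q)

/-- A family of Bernoulli percolation measures, one for each parameter `q ∈ [0,1]`. -/
def BernoulliFamily (d : ℕ) (μ : ℝ → Measure (Config d)) : Prop :=
  ∀ q ∈ Set.Icc (0 : ℝ) 1, IsBernoulli q (μ q)

/-- The critical parameter `p_c(d)` of the percolation family. -/
def pc (d : ℕ) (μ : ℝ → Measure (Config d)) : ℝ :=
  sInf {q | q ∈ Set.Icc (0 : ℝ) 1 ∧ 0 < μ q (percEvent d)}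

/-- `θ_p`, the density of the infinite cluster. -/
def theta {d : ℕ} (μp : Measure (Config d)) : ℝ := (μp (percEvent d)).toReal

/-! ### Cylinders, cutsets and the flow constant -/

/-- The cylinder `cyl(A, h)` of basis `A` and height `h` in direction `v`. -/
def cylSet {d : ℕ} (A : Set (Ed d)) (v : Ed d) (h : ℝ) : Set (Ed d) :=
  {z | ∃ x ∈ A, ∃ t ∈ Set.Icc (-h) h, z = x + t • v}

/-- The upper (`pos = true`) and lower (`pos = false`) open halves `C₁, C₂` of the
cylinder `cyl(A,h) \ A`. -/
def cylSide {d : ℕ} (A : Set (Ed d)) (v : Ed d) (h : ℝ) (pos : Bool) : Set (Ed d) :=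
  {z | ∃ x ∈ A, ∃ t : ℝ,
    (if pos then t ∈ Set.Ioc 0 h else t ∈ Set.Ico (-h) 0) ∧ z = x + t • v}

/-- The discrete boundary `C'ᵢ(A,h)` of a half of a cylinder. -/
def cylBd {d : ℕ} (A : Set (Ed d)) (v : Ed d) (h : ℝ) (pos : Bool) : Set (Vd d) :=
  {x | toR x ∈ cylSide A v h pos ∧ ∃ y : Vd d, adjV x y ∧ toR y ∉ cylSet A v h}

/-- `E` cuts `C'₁(A,h)` from `C'₂(A,h)` in `cyl(A,h)`: every lattice path from
`C'₁(A,h)` to `C'₂(A,h)` staying in the cylinder uses an edge of `E`. -/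
def CutsCyl {d : ℕ} (A : Set (Ed d)) (v : Ed d) (h : ℝ)
    (E : Finset (Sym2 (Vd d))) : Prop :=
  ∀ (k : ℕ) (γ : ℕ → Vd d), γ 0 ∈ cylBd A v h true → γ k ∈ cylBd A v h false →
    (∀ i < k, adjV (γ i) (γ (i + 1))) → (∀ i ≤ k, toR (γ i) ∈ cylSet A v h) →
    ∃ i < k, s(γ i, γ (i + 1)) ∈ E

/-- The minimal number `τ_p(A,h)` of open edges of a cutset between the two halves of
the cylinder `cyl(A,h)`. -/
def tau {d : ℕ} (A : Set (Ed d)) (v : Ed d) (h : ℝ) (ω : Config d) : ℕ :=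
  sInf {m | ∃ E : Finset (Sym2 (Vd d)), CutsCyl A v h E ∧
    (E.filter fun e => ω e = true).card = m}

/-- `A` is a non-degenerate hyperrectangle of dimension `d-1` with unit normal
vector `v`. -/
def IsHyperrect {d : ℕ} (A : Set (Ed d)) (v : Ed d) : Prop :=
  ‖v‖ = 1 ∧ ∃ (u : Fin (d - 1) → Ed d) (x₀ : Ed d) (a : Fin (d - 1) → ℝ),
    (∀ i, 0 < a i) ∧ (∀ i, ‖u i‖ = 1) ∧ (∀ i j, i ≠ j → ⟪u i, u j⟫ = 0) ∧
    (∀ i, ⟪u i, v⟫ = 0) ∧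
    A = {z | ∃ t : Fin (d - 1) → ℝ, (∀ i, t i ∈ Set.Icc 0 (a i)) ∧
      z = x₀ + ∑ i, t i • u i}

/-- `(d-1)`-dimensional Hausdorff measure, as a real number. -/
def area (d : ℕ) (A : Set (Ed d)) : ℝ := (μH[(d : ℝ) - 1] A).toReal

/-- `βv` is the flow constant in the direction `v` for the percolation measure `μp`:
for every non-degenerate hyperrectangle normal to `v` and every height function
going to infinity, the rescaled expected minimal cutset capacity converges to `βv`. -/
def IsFlowConstIn {d : ℕ} (μp : Measure (Config d)) (v : Ed d) (βv : ℝ) : Prop :=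
  ∀ A : Set (Ed d), IsHyperrect A v → ∀ h : ℕ → ℝ, Tendsto h atTop atTop →
    Tendsto
      (fun n : ℕ =>
        (∫ ω, (tau ((n : ℝ) • A) v (h n) ω : ℝ) ∂μp) / area d ((n : ℝ) • A))
      atTop (𝓝 βv)

/-! ### Norms, surface energy, perimeter -/

/-- `ν` is a norm on `ℝ^d`. -/
def IsNorm {d : ℕ} (ν : Ed d → ℝ) : Prop :=
  (∀ x y, ν (x + y) ≤ ν x + ν y) ∧ (∀ (c : ℝ) (x), ν (c • x) = |c| * ν x) ∧
    ∀ x, x ≠ 0 → 0 < ν x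

/-- The Wulff crystal `𝒲_ν = {x | ∀ y, y·x ≤ ν(y)}` of a norm `ν`. -/
def wulffDual {d : ℕ} (ν : Ed d → ℝ) : Set (Ed d) := {x | ∀ y, ⟪y, x⟫ ≤ ν y}

/-- Divergence of a vector field on `ℝ^d`. -/
def divg {d : ℕ} (f : Ed d → Ed d) (x : Ed d) : ℝ :=
  ∑ i, fderiv ℝ f x (EuclideanSpace.single i 1) i

/-- The set of numbers over which the supremum defining the surface energy
`I_ν(S, O)` is taken. -/
def energySet {d : ℕ} (ν : Ed d → ℝ) (S O : Set (Ed d)) : Set ℝ :=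
  {r | ∃ f : Ed d → Ed d, ContDiff ℝ 1 f ∧ HasCompactSupport f ∧ tsupport f ⊆ O ∧
    (∀ x, f x ∈ wulffDual ν) ∧ r = ∫ x in S, divg f x}

/-- The surface energy `I_ν(S, O)`. -/
def surfaceEnergyIn {d : ℕ} (ν : Ed d → ℝ) (S O : Set (Ed d)) : ℝ :=
  sSup (energySet ν S O)

/-- The surface energy `I_ν(S)`. -/
def surfaceEnergy {d : ℕ} (ν : Ed d → ℝ) (S : Set (Ed d)) : ℝ :=
  surfaceEnergyIn ν S Set.univ

/-- The set of numbers over which the supremum defining the perimeter `𝒫(S, O)`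
is taken. -/
def perimSet {d : ℕ} (S O : Set (Ed d)) : Set ℝ :=
  {r | ∃ f : Ed d → Ed d, ContDiff ℝ (⊤ : ℕ∞) f ∧ HasCompactSupport f ∧ tsupport f ⊆ O ∧
    (∀ x, ‖f x‖ ≤ 1) ∧ r = ∫ x in S, divg f x}

/-- The perimeter `𝒫(S, O)` of `S` in the open set `O`. -/
def perimeterIn {d : ℕ} (S O : Set (Ed d)) : ℝ := sSup (perimSet S O)

/-- The perimeter `𝒫(S)`. -/
def perimeter {d : ℕ} (S : Set (Ed d)) : ℝ := perimeterIn S Set.univ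

/-- `S` has finite perimeter (is a Caccioppoli set). -/
def HasFinitePerimeter {d : ℕ} (S : Set (Ed d)) : Prop :=
  BddAbove (perimSet S Set.univ)

/-- The unit Wulff crystal `Ŵ = ⋂_{v ∈ S^{d-1}} {x | x·v ≤ β(v)}`. -/
def wulffHat {d : ℕ} (β : Ed d → ℝ) : Set (Ed d) :=
  {x | ∀ v : Ed d, ‖v‖ = 1 → ⟪x, v⟫ ≤ β v}

/-- A convex polytope: a finite intersection of half-spaces. -/
def IsConvexPolytope {d : ℕ} (P : Set (Ed d)) : Prop :=
  ∃ (m : ℕ) (v : Fin m → Ed d) (c : Fin m → ℝ), (∀ i, ‖v i‖ = 1) ∧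
    P = ⋂ i, {x | ⟪x, v i⟫ ≤ c i}

/-- Pairing of the empirical measure `μ_n = n^{-d} Σ_{x ∈ G} δ_{x/n}` with a
function `f`. -/
def muFn {d : ℕ} (n : ℕ) (G : Finset (Vd d)) (f : Ed d → ℝ) : ℝ :=
  (1 / (n : ℝ) ^ d) * ∑ x ∈ G, f ((1 / (n : ℝ)) • toR x)

/-- Pairing of the measure `ν_{x+W} = θ_p ℒ^d(· ∩ (x+W))` with a function `f`. -/
def nuFn {d : ℕ} (θp : ℝ) (W : Set (Ed d)) (x : Ed d) (f : Ed d → ℝ) : ℝ :=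
  θp * ∫ y in (x +ᵥ W), f y

/-! ### Components enclosed by a minimizer, lattice animals -/

/-- `C` is enclosed by `G`: every open path from `C` to infinity passes through a
vertex of `G`. -/
def EnclosedBy {d : ℕ} (ω : Config d) (G : Finset (Vd d)) (C : Set (Vd d)) : Prop :=
  ∀ γ : ℕ → Vd d, γ 0 ∈ C → (∀ k, openAdj ω (γ k) (γ (k + 1))) →
    (Set.range γ).Infinite → ∃ k, γ k ∈ (G : Set (Vd d))

/-- The large connected components of `𝒞_∞ ∖ G` enclosed by `G`. -/
def largeEnclosed {d : ℕ} (n : ℕ) (ω : Config d) (G : Finset (Vd d)) :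
    Set (Set (Vd d)) :=
  {C | (∃ x ∈ infCluster ω \ ↑G, C = clusterIn ω (infCluster ω \ ↑G) x) ∧
    EnclosedBy ω G C ∧
    (n : ℝ) ^ ((1 : ℝ) - 1 / (2 * ((d : ℝ) - 1))) ≤ (C.ncard : ℝ)}

/-- `*`-adjacency: `‖x - y‖_∞ = 1`. -/
def starAdj {d : ℕ} (x y : Vd d) : Prop := x ≠ y ∧ ∀ i, (x i - y i).natAbs ≤ 1

/-- A lattice animal: a `*`-connected finite set of vertices. -/
def IsAnimal {d : ℕ} (Γ : Finset (Vd d)) : Prop :=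
  ∀ x ∈ Γ, ∀ y ∈ Γ,
    Relation.ReflTransGen (fun a b => a ∈ Γ ∧ b ∈ Γ ∧ starAdj a b) x y


/-- **Lemma (the cylinders over the translated faces of a convex polytope have pairwise
disjoint interiors).** Let `P = ⋂ᵢ {x : x·vᵢ ≤ φᵢ}` be a convex polytope with pairwise
distinct unit exterior normal vectors and nonempty faces `Fᵢ`. For every `δ > 0` the
cylinders `cyl(Fᵢ + δvᵢ, δ)` have pairwise disjoint interiors. -/
theorem face_cylinders_disjoint_interiors
    (d : ℕ) (hd : 2 ≤ d) (m : ℕ) (v : Fin m → Ed d) (c : Fin m → ℝ)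
    (hunit : ∀ i, ‖v i‖ = 1) (hdist : ∀ i j, i ≠ j → v i ≠ v j)
    (P : Set (Ed d)) (hP : P = ⋂ i, {x | ⟪x, v i⟫ ≤ c i})
    (F : Fin m → Set (Ed d)) (hF : ∀ i, F i = P ∩ {x | ⟪x, v i⟫ = c i})
    (hFne : ∀ i, (F i).Nonempty) (δ : ℝ) (hδ : 0 < δ) :
    ∀ i j, i ≠ j →
      interior (cylSet ((δ • v i) +ᵥ F i) (v i) δ) ∩
        interior (cylSet ((δ • v j) +ᵥ F j) (v j) δ) = ∅ := by
  intro i j hij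
  rw [Set.eq_empty_iff_forall_notMem]
  rintro z ⟨hzi, hzj⟩
  -- every point of the cylinder over face k has inner product with v k at least c k
  have hcylmem : ∀ k : Fin m, ∀ w ∈ cylSet ((δ • v k) +ᵥ F k) (v k) δ,
      ∃ x ∈ F k, ∃ s : ℝ, 0 ≤ s ∧ w = x + s • v k := by
    intro k w hw
    obtain ⟨a, ha, t, ht, hweq⟩ := hw
    obtain ⟨x, hx, hax⟩ := ha
    refine ⟨x, hx, δ + t, by linarith [ht.1], ?_⟩
    rw [hweq, ← hax]
    simp only [vadd_eq_add]
    rw [add_smul]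
    abel
  have hxF : ∀ k : Fin m, ∀ x ∈ F k, ⟪x, v k⟫ = c k := by
    intro k x hx
    rw [hF k] at hx
    exact hx.2
  have hFP : ∀ k : Fin m, ∀ x ∈ F k, x ∈ P := by
    intro k x hx
    rw [hF k] at hx
    exact hx.1
  have hPle : ∀ x ∈ P, ∀ k : Fin m, ⟪x, v k⟫ ≤ c k := by
    intro x hx k
    rw [hP] at hx
    exact Set.mem_iInter.1 hx k
  have hvv : ∀ k : Fin m, ⟪v k, v k⟫ = 1 := by
    intro k
    rw [real_inner_self_eq_norm_mul_norm, hunit k]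
    norm_num
  have hinner : ∀ k : Fin m, ∀ w ∈ cylSet ((δ • v k) +ᵥ F k) (v k) δ,
      c k ≤ ⟪w, v k⟫ := by
    intro k w hw
    obtain ⟨x, hx, s, hs, hweq⟩ := hcylmem k w hw
    rw [hweq, inner_add_left, real_inner_smul_left, hvv k, hxF k x hx]
    nlinarith
  -- interior points write as x + s • v k with s > 0
  have key : ∀ k : Fin m, z ∈ interior (cylSet ((δ • v k) +ᵥ F k) (v k) δ) →
      ∃ x ∈ F k, ∃ s : ℝ, 0 < s ∧ z = x + s • v k := by
    intro k hk
    obtain ⟨ε, hε, hball⟩ := Metric.isOpen_iff.1 isOpen_interior z hk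
    obtain ⟨x, hx, s, hs, hzeq⟩ := hcylmem k z (interior_subset hk)
    have hmem : z - (ε / 2) • v k ∈ cylSet ((δ • v k) +ᵥ F k) (v k) δ := by
      apply interior_subset
      apply hball
      rw [Metric.mem_ball, dist_eq_norm]
      have : z - (ε / 2) • v k - z = -((ε / 2) • v k) := by abel
      rw [this, norm_neg, norm_smul, hunit k]
      simp only [mul_one, Real.norm_eq_abs]
      rw [abs_of_pos (by linarith)]
      linarith
    have h1 := hinner k _ hmem
    rw [inner_sub_left, real_inner_smul_left, hvv k] at h1
    have h2 : ⟪z, v k⟫ = c k + s := by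
      rw [hzeq, inner_add_left, real_inner_smul_left, hvv k, hxF k x hx]
      ring
    refine ⟨x, hx, s, by nlinarith, hzeq⟩
  obtain ⟨x, hx, s, hs, hzx⟩ := key i hzi
  obtain ⟨y, hy, t, ht, hzy⟩ := key j hzj
  -- variational inequalities give x = y
  have hvar1 : ⟪z - x, y - x⟫ ≤ 0 := by
    have hzx' : z - x = s • v i := by rw [hzx]; abel
    rw [hzx', real_inner_smul_left, inner_sub_right]
    have h1 : ⟪v i, x⟫ = c i := by rw [real_inner_comm]; exact hxF i x hx
    have h2 : ⟪v i, y⟫ ≤ c i := by rw [real_inner_comm]; exact hPle y (hFP j y hy) i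
    nlinarith
  have hvar2 : ⟪z - y, x - y⟫ ≤ 0 := by
    have hzy' : z - y = t • v j := by rw [hzy]; abel
    rw [hzy', real_inner_smul_left, inner_sub_right]
    have h1 : ⟪v j, y⟫ = c j := by rw [real_inner_comm]; exact hxF j y hy
    have h2 : ⟪v j, x⟫ ≤ c j := by rw [real_inner_comm]; exact hPle x (hFP i x hx) j
    nlinarith
  have hsum : ⟪y - x, y - x⟫ = ⟪z - x, y - x⟫ + ⟪z - y, x - y⟫ := by
    have hyx : (y - x : Ed d) = (z - x) - (z - y) := by abel
    have hxy : (x - y : Ed d) = -(y - x) := by abel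
    rw [hxy, inner_neg_right, ← sub_eq_add_neg, ← inner_sub_left, ← hyx]
  have hxy0 : y - x = 0 := by
    rw [← real_inner_self_nonpos, hsum]
    linarith
  have hxy : x = y := by
    have := sub_eq_zero.1 hxy0
    exact this.symm
  -- hence s • v i = t • v j, and taking norms s = t, so v i = v j
  have hsv : s • v i = t • v j := by
    have h1 : s • v i = z - x := by rw [hzx]; abel
    have h2 : t • v j = z - y := by rw [hzy]; abel
    rw [h1, h2, hxy]
  have hst : s = t := by
    have := congrArg norm hsv
    rw [norm_smul, norm_smul, hunit i, hunit j] at this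
    simp only [mul_one, Real.norm_eq_abs] at this
    rwa [abs_of_pos hs, abs_of_pos ht] at this
  apply hdist i j hij
  have : s • v i = s • v j := by rw [hsv, hst]
  exact smul_right_injective _ (ne_of_gt hs) this

end AnchoredIso
end
end

section
/- Let d ≥ 1 and let X be a nonempty finite subset of ℤ^d. There exist an integer m with 1 ≤ m ≤ |X|, points y₁,…,y_m ∈ X and integers r₁,…,r_m ∈ {1,…,3^{|X|}} such that: (i) ⋃_{x∈X} B(x,1) ⊂ ⋃_{1≤i≤m} B(y_i, r_i), and (ii) the closed balls B(y_i, r_i + 1), 1 ≤ i ≤ m, are pairwise disjoint; here B(y,r) denotes the closed Euclidean ball of center y and radius r in ℝ^d and |X| the cardinality of X. -/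
open MeasureTheory Filter Set Metric
open scoped ENNReal Topology Pointwise RealInnerProductSpace ProbabilityTheory symmDiff

noncomputable section

namespace AnchoredIso

theorem aux_covering (d : ℕ) (X : Finset (Vd d)) (hX : X.Nonempty) :
    ∀ (k : ℕ) (y : Fin k → Vd d) (r : Fin k → ℕ),
      k ≤ X.card → (∀ i, y i ∈ X) → (∀ i, 1 ≤ r i) →
      (∀ i, r i + 1 ≤ 2 * 3 ^ (X.card - k)) →
      (⋃ x ∈ X, closedBall (toR x) 1) ⊆ (⋃ i, closedBall (toR (y i)) (r i)) →
      ∃ (m : ℕ) (y' : Fin m → Vd d) (r' : Fin m → ℕ),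
        1 ≤ m ∧ m ≤ X.card ∧ (∀ i, y' i ∈ X) ∧
        (∀ i, 1 ≤ r' i ∧ r' i ≤ 3 ^ X.card) ∧
        (⋃ x ∈ X, closedBall (toR x) 1) ⊆ (⋃ i, closedBall (toR (y' i)) (r' i)) ∧
        (∀ i j, i ≠ j →
          closedBall (toR (y' i)) ((r' i : ℝ) + 1) ∩
            closedBall (toR (y' j)) ((r' j : ℝ) + 1) = ∅) := by
  intro k
  induction k with
  | zero =>
    intro y r _ _ _ _ hcov
    obtain ⟨x, hx⟩ := hX
    exfalso
    have hmem : toR x ∈ ⋃ x ∈ X, closedBall (toR x) 1 :=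
      Set.mem_biUnion hx (mem_closedBall_self zero_le_one)
    have := hcov hmem
    simp at this
  | succ k ih =>
    intro y r hk hyX hr1 hrB hcov
    by_cases hdisj : ∀ i j, i ≠ j →
        closedBall (toR (y i)) ((r i : ℝ) + 1) ∩
          closedBall (toR (y j)) ((r j : ℝ) + 1) = ∅
    · refine ⟨k + 1, y, r, Nat.succ_le_succ (Nat.zero_le _), hk, hyX, ?_, hcov, hdisj⟩
      intro i
      refine ⟨hr1 i, ?_⟩
      have hc1 : 1 ≤ X.card := hX.card_pos
      have h1 : r i + 1 ≤ 2 * 3 ^ (X.card - (k+1)) := hrB i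
      have h2 : (3:ℕ) ^ (X.card - (k+1)) ≤ 3 ^ (X.card - 1) :=
        Nat.pow_le_pow_right (by norm_num) (by omega)
      have h3 : 2 * 3 ^ (X.card - 1) ≤ 3 ^ X.card := by
        calc 2 * 3 ^ (X.card - 1) ≤ 3 * 3 ^ (X.card - 1) := by omega
        _ = 3 ^ (X.card - 1 + 1) := by ring
        _ = 3 ^ X.card := by congr 1; omega
      omega
    · push_neg at hdisj
      obtain ⟨i, j, hij, hne⟩ := hdisj
      obtain ⟨z, hzi, hzj⟩ := hne
      rw [mem_closedBall] at hzi hzj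
      have hdij : dist (toR (y j)) (toR (y i)) ≤ (r j : ℝ) + 1 + ((r i : ℝ) + 1) := by
        calc dist (toR (y j)) (toR (y i)) ≤ dist (toR (y j)) z + dist z (toR (y i)) :=
          dist_triangle _ _ _
        _ ≤ (r j : ℝ) + 1 + ((r i : ℝ) + 1) := by
          rw [dist_comm (toR (y j)) z]; linarith
      obtain ⟨t₀, ht₀⟩ := Fin.exists_succAbove_eq hij
      classical
      set r' : Fin k → ℕ := fun t =>
        if j.succAbove t = i then r i + 2 * r j + 2 else r (j.succAbove t) with hr'
      have hrt₀ : r' t₀ = r i + 2 * r j + 2 := by simp only [hr', if_pos ht₀]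
      have hsub : ∀ t, r (j.succAbove t) ≤ r' t := by
        intro t
        simp only [hr']
        split
        · next h =>
            rw [h]
            have := hrB i
            have := hrB j
            omega
        · omega
      have hcov' : (⋃ x ∈ X, closedBall (toR x) 1) ⊆
          ⋃ t, closedBall (toR (y (j.succAbove t))) (r' t) := by
        refine hcov.trans (Set.iUnion_subset fun a => ?_)
        by_cases ha : a = j
        · subst ha
          refine Set.subset_iUnion_of_subset t₀ fun w hw => ?_
          rw [mem_closedBall] at hw ⊢
          rw [ht₀, hrt₀]
          calc dist w (toR (y i))
              ≤ dist w (toR (y a)) + dist (toR (y a)) (toR (y i)) := dist_triangle _ _ _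
            _ ≤ (r a : ℝ) + ((r a : ℝ) + 1 + ((r i : ℝ) + 1)) := by linarith
            _ ≤ ((r i + 2 * r a + 2 : ℕ) : ℝ) := by push_cast; linarith
        · obtain ⟨t, ht⟩ := Fin.exists_succAbove_eq ha
          refine Set.subset_iUnion_of_subset t ?_
          rw [ht]
          exact closedBall_subset_closedBall (Nat.cast_le.2 (ht ▸ hsub t))
      refine ih (fun t => y (j.succAbove t)) r' (by omega) (fun t => hyX _)
        (fun t => le_trans (hr1 _) (hsub t)) ?_ hcov'
      intro t
      have he : X.card - k = (X.card - (k+1)) + 1 := by omega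
      have h1 := hrB i
      have h2 := hrB j
      have h3 := hrB (j.succAbove t)
      have hpow : (2:ℕ) * 3 ^ (X.card - k) = 3 * (2 * 3 ^ (X.card - (k+1))) := by
        rw [he]; ring
      simp only [hr']
      split
      · omega
      · omega

/-- **Lemma (separated covering of a family of unit balls, Lemma 17.1 in Cerf's
Saint-Flour notes).** For every nonempty finite `X ⊂ ℤ^d` there are `m ≤ |X|` points
`y₁, …, y_m ∈ X` and radii `rᵢ ∈ {1, …, 3^{|X|}}` such that
`⋃_{x ∈ X} B(x,1) ⊆ ⋃ᵢ B(yᵢ, rᵢ)` and the balls `B(yᵢ, rᵢ + 1)` are pairwise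
disjoint. -/
theorem separated_ball_covering
    (d : ℕ) (hd : 1 ≤ d) (X : Finset (Vd d)) (hX : X.Nonempty) :
    ∃ (m : ℕ) (y : Fin m → Vd d) (r : Fin m → ℕ),
      1 ≤ m ∧ m ≤ X.card ∧ (∀ i, y i ∈ X) ∧
      (∀ i, 1 ≤ r i ∧ r i ≤ 3 ^ X.card) ∧
      (⋃ x ∈ X, closedBall (toR x) 1) ⊆ (⋃ i, closedBall (toR (y i)) (r i)) ∧
      (∀ i j, i ≠ j →
        closedBall (toR (y i)) ((r i : ℝ) + 1) ∩
          closedBall (toR (y j)) ((r j : ℝ) + 1) = ∅) := by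
  classical
  have hcov : (⋃ x ∈ X, closedBall (toR x) 1) ⊆
      ⋃ i, closedBall (toR ((fun i => ((X.equivFin.symm i : X) : Vd d)) i))
        (((fun _ : Fin X.card => (1 : ℕ)) i)) := by
    intro z hz
    simp only [Set.mem_iUnion] at hz ⊢
    obtain ⟨x, hx, hzx⟩ := hz
    exact ⟨X.equivFin ⟨x, hx⟩, by simpa using hzx⟩
  exact aux_covering d X hX X.card
      (fun i => ((X.equivFin.symm i : X) : Vd d)) (fun _ => 1)
      le_rfl (fun i => (X.equivFin.symm i).2) (fun _ => le_rfl)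
      (by intro i; simp) hcov

end AnchoredIso
end
end
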